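/- Let n ≥ 1, r > 0, and let P be a real n×n matrix such that Id − (r²/2)·P is invertible. Define g(s) := Id − s²·P + (s⁴/4)·P², I_r := r^{-2}·g(r), II_r := (1/(2r))·g′(r) − r^{-2}·g(r), and W := I_r^{-1}·II_r. Then Id − W is invertible and (Id − W)·(Id − (r²/2)·P) = 2·Id; equivalently, Id − (r²/2)·P = 2·(Id − W)^{-1}. -/

import Mathlib

attribute [local instance] Matrix.normedAddCommGroup Matrix.normedSpace

/-!
Since `Id - s²P + (s⁴/4)P² = (Id - (s²/2)P)²`, writing `A = Id - (r²/2)P` one has `I_r = r⁻²A²`,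
and a direct computation gives `I_r - II_r = (2/r²)A`. Hence
`Id - W = I_r⁻¹(I_r - II_r) = 2A⁻¹`, from which all three claims follow.
-/
section Expansion

variable {R : Type*}

noncomputable def metricExpansion [Ring R] [Algebra ℝ R] (P : R) (s : ℝ) : R :=
  1 - s ^ 2 • P + (s ^ 4 / 4) • P ^ 2

theorem metricExpansion_eq_sq [Ring R] [Algebra ℝ R] (P : R) (s : ℝ) :
    metricExpansion P s = (1 - (s ^ 2 / 2) • P) ^ 2 := by
  simp only [metricExpansion, sq, sub_mul, mul_sub, one_mul, mul_one, smul_mul_smul_comm]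
  match_scalars <;> ring

theorem metricExpansion_sub_deriv [Ring R] [Algebra ℝ R] (P : R) {s : ℝ} (hs : s ≠ 0) :
    (s ^ 2)⁻¹ • metricExpansion P s
        - ((1 / (2 * s)) • (s ^ 3 • P ^ 2 - (2 * s) • P) - (s ^ 2)⁻¹ • metricExpansion P s)
      = (2 / s ^ 2) • (1 - (s ^ 2 / 2) • P) := by
  simp only [metricExpansion, smul_sub, smul_add, smul_smul]
  match_scalars <;> field_simp <;> ring

end Expansion

theorem hasDerivAt_sub_sq_smul_add_quartic_smul {E : Type*} [NormedAddCommGroup E]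
    [NormedSpace ℝ E] (u v w : E) (s : ℝ) :
    HasDerivAt (fun t : ℝ => u - t ^ 2 • v + (t ^ 4 / 4) • w) (s ^ 3 • w - (2 * s) • v) s := by
  have hsq : HasDerivAt (fun t : ℝ => t ^ 2) (2 * s) s := by
    simpa using hasDerivAt_pow 2 s
  have hquart : HasDerivAt (fun t : ℝ => t ^ 4 / 4) (s ^ 3) s := by
    simpa using (hasDerivAt_pow 4 s).div_const 4
  exact (((hasDerivAt_const s u).sub (hsq.smul_const v)).add
    (hquart.smul_const w)).congr_deriv (by abel)

theorem Matrix.one_sub_inv_mul_eq_smul_inv {n : Type*} [Fintype n] [DecidableEq n]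
    {A I II : Matrix n n ℝ} (hA : IsUnit A) {s : ℝ} (hs : s ≠ 0)
    (hI : I = (s ^ 2)⁻¹ • A ^ 2) (hII : I - II = (2 / s ^ 2) • A) :
    1 - I⁻¹ * II = (2 : ℝ) • A⁻¹ := by
  have hIunit : IsUnit I.det := by
    rw [hI, Matrix.det_smul, Matrix.det_pow]
    exact (isUnit_iff_ne_zero.mpr (by positivity)).mul ((A.isUnit_iff_isUnit_det.mp hA).pow 2)
  have hIA : I * (2 : ℝ) • A⁻¹ = I - II := by
    rw [hII, hI, Matrix.smul_mul, Matrix.mul_smul, sq A, Matrix.mul_assoc,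
      Matrix.mul_nonsing_inv _ (A.isUnit_iff_isUnit_det.mp hA), Matrix.mul_one, smul_smul]
    congr 1
    ring
  rw [← Matrix.nonsing_inv_mul_cancel_left I ((2 : ℝ) • A⁻¹) hIunit, hIA, Matrix.mul_sub,
    Matrix.nonsing_inv_mul _ hIunit]

theorem stmt_3_general (n : ℕ) (r : ℝ) (hr : 0 < r)
    (P : Matrix (Fin n) (Fin n) ℝ)
    (h : IsUnit (1 - (r ^ 2 / 2) • P))
    (g : ℝ → Matrix (Fin n) (Fin n) ℝ)
    (hg : ∀ s : ℝ, g s = 1 - s ^ 2 • P + (s ^ 4 / 4) • P ^ 2)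
    (Ir IIr W : Matrix (Fin n) (Fin n) ℝ)
    (hIr : Ir = (r ^ 2)⁻¹ • g r)
    (hIIr : IIr = (1 / (2 * r)) • deriv g r - (r ^ 2)⁻¹ • g r)
    (hW : W = Ir⁻¹ * IIr) :
    IsUnit (1 - W) ∧
    (1 - W) * (1 - (r ^ 2 / 2) • P) = 2 • (1 : Matrix (Fin n) (Fin n) ℝ) ∧
    1 - (r ^ 2 / 2) • P = 2 • (1 - W)⁻¹ := by
  set A := 1 - (r ^ 2 / 2) • P
  have hr0 : r ≠ 0 := hr.ne'
  have hgP : g = metricExpansion P := funext hg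
  have hderiv : deriv g r = r ^ 3 • P ^ 2 - (2 * r) • P :=
    hgP ▸ (hasDerivAt_sub_sq_smul_add_quartic_smul 1 P (P ^ 2) r).deriv
  have hIrA : Ir = (r ^ 2)⁻¹ • A ^ 2 := by rw [hIr, hgP, metricExpansion_eq_sq]
  have hIIr : Ir - IIr = (2 / r ^ 2) • A := by
    rw [hIr, hIIr, hderiv, hgP, metricExpansion_sub_deriv P hr0]
  have hWA : 1 - W = (2 : ℝ) • A⁻¹ := hW ▸ Matrix.one_sub_inv_mul_eq_smul_inv h hr0 hIrA hIIr
  have hAdet : IsUnit A.det := A.isUnit_iff_isUnit_det.mp h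
  have hinv : (1 - W) * ((2 : ℝ)⁻¹ • A) = 1 := by
    rw [hWA, Matrix.smul_mul, Matrix.mul_smul, Matrix.nonsing_inv_mul _ hAdet, smul_smul]
    norm_num
  refine ⟨(1 - W).isUnit_iff_isUnit_det.mpr (Matrix.isUnit_det_of_right_inverse hinv), ?_, ?_⟩
  · rw [hWA, Matrix.smul_mul, Matrix.nonsing_inv_mul _ hAdet, two_nsmul, two_smul]
  · rw [Matrix.inv_eq_right_inv hinv, two_nsmul, ← two_smul ℝ, smul_smul]
    norm_num

/-- Matrix form of Theorem 1.1: with `g(s) = Id - s²P + (s⁴/4)P²`,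
`I_r = r⁻²g(r)`, `II_r = (1/(2r))g′(r) - r⁻²g(r)` and `W = I_r⁻¹ II_r`, if
`Id - (r²/2)P` is invertible then `Id - W` is invertible and
`(Id - W)(Id - (r²/2)P) = 2·Id`, i.e. `Id - (r²/2)P = 2(Id - W)⁻¹`. -/
theorem stmt_3 (n : ℕ) (hn : 1 ≤ n) (r : ℝ) (hr : 0 < r)
    (P : Matrix (Fin n) (Fin n) ℝ)
    (h : IsUnit (1 - (r ^ 2 / 2) • P))
    (g : ℝ → Matrix (Fin n) (Fin n) ℝ)
    (hg : ∀ s : ℝ, g s = 1 - s ^ 2 • P + (s ^ 4 / 4) • P ^ 2)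
    (Ir IIr W : Matrix (Fin n) (Fin n) ℝ)
    (hIr : Ir = (r ^ 2)⁻¹ • g r)
    (hIIr : IIr = (1 / (2 * r)) • deriv g r - (r ^ 2)⁻¹ • g r)
    (hW : W = Ir⁻¹ * IIr) :
    IsUnit (1 - W) ∧
    (1 - W) * (1 - (r ^ 2 / 2) • P) = 2 • (1 : Matrix (Fin n) (Fin n) ℝ) ∧
    1 - (r ^ 2 / 2) • P = 2 • (1 - W)⁻¹ :=
  stmt_3_general n r hr P h g hg Ir IIr W hIr hIIr hW
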